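/- Let F be a field of characteristic zero, Q an F-vector space with a nondegenerate quadratic form B, and c₀ ∈ Q with B(c₀) = 1. On V = F ⊕ Q define N(α, x₀) := α·B(x₀), the sharp map (α, x₀)^# := (B(x₀), α·x₀*) where x₀* := B_bil(x₀, c₀)·c₀ − x₀ (B_bil the associated bilinear form with B_bil(x,x) = 2B(x) normalized so that B(c₀)=1 gives c₀* = c₀), and pairing ((α,x₀),(β,y₀)) := αβ + B_bil(x₀*, y₀). Then for all v ∈ V, (v^#)^# = N(v)·v. -/

import Mathlib

open QuadraticMap

/-!
The map `x ↦ x* = B_bil(x, c₀) • c₀ - x` is, up to sign, the reflection through `c₀`; since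
`B_bil(c₀, c₀) = 2 B(c₀) = 2`, it is a linear involution preserving `B`. Hence
`(α, x)^# = (B x, α • x*)` has `((α, x)^#)^# = (α² B(x*), α B(x) • x**) = α B(x) • (α, x)`.
-/

namespace QuadraticMap

variable {R M : Type*} [CommRing R] [AddCommGroup M] [Module R M]
  {Q : QuadraticForm R M} {c : M}

theorem map_polar_smul_sub (hc : Q c = 1) (x : M) : Q (polar Q x c • c - x) = Q x := by
  rw [sub_eq_add_neg, QuadraticMap.map_add ⇑Q, QuadraticMap.map_smul, QuadraticMap.map_neg,
    polar_neg_right, polar_smul_left, hc, polar_comm, smul_eq_mul, smul_eq_mul]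
  ring

theorem polar_smul_sub_left (hc : Q c = 1) (x : M) :
    polar Q (polar Q x c • c - x) c = polar Q x c := by
  rw [polar_sub_left, polar_smul_left, polar_self, hc, smul_eq_mul]
  ring

theorem polar_smul_sub_polar_smul_sub (hc : Q c = 1) (x : M) :
    polar Q (polar Q x c • c - x) c • c - (polar Q x c • c - x) = x := by
  rw [polar_smul_sub_left hc, sub_sub_cancel]

theorem polar_smul_sub_smul (a : R) (x : M) :
    polar Q (a • x) c • c - a • x = a • (polar Q x c • c - x) := by
  rw [polar_smul_left, smul_sub, smul_smul, smul_eq_mul]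

end QuadraticMap

theorem quadraticSpace_cubicNorm_adjoint_identity_general
    {F Q : Type*} [Field F] [AddCommGroup Q] [Module F Q]
    (B : QuadraticForm F Q)
    (c₀ : Q) (hc₀ : B c₀ = 1) :
    ∀ v : F × Q,
      (let star : Q → Q := fun x => polar B x c₀ • c₀ - x
       let N : F × Q → F := fun w => w.1 * B w.2
       let sharp : F × Q → F × Q := fun w => (B w.2, w.1 • star w.2)
       sharp (sharp v) = N v • v) := by
  rintro ⟨α, x⟩
  refine Prod.ext ?_ ?_
  · change B (α • (polar B x c₀ • c₀ - x)) = (α * B x) * α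
    rw [QuadraticMap.map_smul, map_polar_smul_sub hc₀, smul_eq_mul]
    ring
  · change B x • (polar B (α • (polar B x c₀ • c₀ - x)) c₀ • c₀ - α • (polar B x c₀ • c₀ - x))
      = (α * B x) • x
    rw [polar_smul_sub_smul, polar_smul_sub_polar_smul_sub hc₀, smul_smul, mul_comm]

/-- The cubic norm structure attached to a quadratic space: on `V = F ⊕ Q` with
`N(α, x₀) = α·B(x₀)` and `(α, x₀)^# = (B(x₀), α • x₀*)`, where
`x₀* = B_bil(x₀,c₀)•c₀ − x₀` (with `B_bil` the polar bilinear form of `B`),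
one has `(v^#)^# = N(v) • v` for all `v ∈ V`. -/
theorem quadraticSpace_cubicNorm_adjoint_identity
    {F Q : Type*} [Field F] [CharZero F] [AddCommGroup Q] [Module F Q]
    (B : QuadraticForm F Q)
    (hnd : ∀ x : Q, (∀ y : Q, polar B x y = 0) → x = 0)
    (c₀ : Q) (hc₀ : B c₀ = 1) :
    ∀ v : F × Q,
      (let star : Q → Q := fun x => polar B x c₀ • c₀ - x
       let N : F × Q → F := fun w => w.1 * B w.2
       let sharp : F × Q → F × Q := fun w => (B w.2, w.1 • star w.2)
       sharp (sharp v) = N v • v) :=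
  quadraticSpace_cubicNorm_adjoint_identity_general B c₀ hc₀
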